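/- If r is a rotor type with exactly two states, then the period of the hitting sequence UD(r) is at most |r|²/2, and the period of the hitting sequence BT(r) of the depth-2 binary tree network on r is at most |r|². -/
import Mathlib


open scoped Classical

/-! ### Periodic sequences and rotor types

A rotor type is modelled as a function `f : ℕ → ℕ` (0-based reindexing of the paper's
sequence `r(1), r(2), …`, so the paper's `r(k)` is `f (k-1)`), together with its minimal
period `n`.  The states of the rotor are the values occurring in one period. -/

def IsPeriodicWith {α : Type*} (f : ℕ → α) (n : ℕ) : Prop := ∀ k, f (k + n) = f k

def IsMinimalPeriod {α : Type*} (f : ℕ → α) (n : ℕ) : Prop :=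
  0 < n ∧ IsPeriodicWith f n ∧ ∀ m, 0 < m → IsPeriodicWith f m → n ≤ m

noncomputable def minPeriod {α : Type*} (f : ℕ → α) : ℕ :=
  sInf {n | 0 < n ∧ IsPeriodicWith f n}

/-- `f` (with period `n`) reads the same forwards and backwards:
`r(k) = r(n+1-k)` for `1 ≤ k ≤ n`, written 0-based. -/
def Palindromic (f : ℕ → ℕ) (n : ℕ) : Prop := ∀ k < n, f k = f (n - 1 - k)

/-- `f` (with period `n`) is block-repetitive with block length `m`. -/
def BlockRepetitive (f : ℕ → ℕ) (n m : ℕ) : Prop :=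
  2 ≤ m ∧ m ∣ n ∧ ∀ k : ℕ, ∀ j < m, f (k * m + j) = f (k * m)

def Boppy (f : ℕ → ℕ) (n : ℕ) : Prop := Palindromic f n ∨ ∃ m, BlockRepetitive f n m

/-- The set of states of a rotor type of period `n`. -/
def states (f : ℕ → ℕ) (n : ℕ) : Finset ℕ := (Finset.range n).image f

/-- Number of occurrences of the state `v` among the first `n` terms of `f`. -/
noncomputable def countIn (f : ℕ → ℕ) (n v : ℕ) : ℕ :=
  ((Finset.range n).filter (fun k => f k = v)).card

/-- Merging reduction `s → s'`: replace every occurrence of `s` by `s'`. -/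
def merge (f : ℕ → ℕ) (s s' : ℕ) : ℕ → ℕ := fun k => if f k = s then s' else f k

/-- Destructive reduction `x(s)`: delete every occurrence of `s` and re-index. -/
noncomputable def destroy (f : ℕ → ℕ) (s : ℕ) : ℕ → ℕ :=
  fun k => f (Nat.nth (fun i => f i ≠ s) k)

/-- A two-state rotor type with states `1` and `2`, both occurring. -/
def TwoState (f : ℕ → ℕ) : Prop :=
  (∀ k, f k = 1 ∨ f k = 2) ∧ (∃ k, f k = 1) ∧ (∃ k, f k = 2)

/-! ### The compressor

The particle's trajectory alternates: at step `t` (0-based) the source `v1` fires its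
`(t+1)`-st term `f t`; if it is `1`, the particle moves to `v2`, whose firing count so far
is the number of `1`'s among `f 0, …, f (t-1)`; if it is `2`, it moves to `v3` similarly.
From `v2`/`v3` the particle either returns to the source (no target hit) or hits target
`4`/`5` and restarts at the source.  `X Y : Bool` encode the variation, `true` = `U`:
at `v2` state `1` routes up to `v1` iff `X = true`; at `v3` state `1` routes up iff
`Y = true`. -/

noncomputable def hitAt (X Y : Bool) (r : ℕ → ℕ) (t : ℕ) : Option ℕ :=
  if r t = 1 then
    (if decide (r (countIn r t 1) = 1) ≠ X then some 4 else none)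
  else
    (if decide (r (countIn r t 2) = 1) ≠ Y then some 5 else none)

/-- The hitting sequence of the compressor variation `XY` on rotor type `r`:
the subsequence of recorded targets (`4` or `5`), in order. -/
noncomputable def compSeq (X Y : Bool) (r : ℕ → ℕ) : ℕ → ℕ :=
  fun k => (hitAt X Y r (Nat.nth (fun t => (hitAt X Y r t).isSome = true) k)).getD 4

noncomputable def UUseq (r : ℕ → ℕ) : ℕ → ℕ := compSeq true true r
noncomputable def UDseq (r : ℕ → ℕ) : ℕ → ℕ := compSeq true false r
noncomputable def DUseq (r : ℕ → ℕ) : ℕ → ℕ := compSeq false true r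
noncomputable def DDseq (r : ℕ → ℕ) : ℕ → ℕ := compSeq false false r

/-- The compressor output with targets `4, 5` relabelled as states `1, 2`. -/
noncomputable def compOp (X Y : Bool) (r : ℕ → ℕ) : ℕ → ℕ := fun k => compSeq X Y r k - 3

noncomputable def UUop (r : ℕ → ℕ) : ℕ → ℕ := compOp true true r
noncomputable def UDop (r : ℕ → ℕ) : ℕ → ℕ := compOp true false r
noncomputable def DUop (r : ℕ → ℕ) : ℕ → ℕ := compOp false true r
noncomputable def DDop (r : ℕ → ℕ) : ℕ → ℕ := compOp false false r

/-- A finite composition of compressor operations (each given by its pair of letters),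
with the targets relabelled back to `1, 2` after each application. -/
noncomputable def applyOps (ops : List (Bool × Bool)) (r : ℕ → ℕ) : ℕ → ℕ :=
  ops.foldl (fun s o => compOp o.1 o.2 s) r

/-- The hitting sequence of the depth-2 binary tree network `BT` on `r`
(targets `1,2,3,4`): every firing of the source produces a hit. -/
noncomputable def BTseq (r : ℕ → ℕ) : ℕ → ℕ :=
  fun t => if r t = 1 then (if r (countIn r t 1) = 1 then 1 else 2)
           else (if r (countIn r t 2) = 1 then 3 else 4)

/-- Two sequences are equivalent if one is obtained from the other by a relabelling
that is injective on the values of the first (a bijective relabelling of states). -/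
def SeqEquiv {α β : Type*} (f : ℕ → α) (g : ℕ → β) : Prop :=
  ∃ ρ : α → β, (∀ k, ρ (f k) = g k) ∧ ∀ k l, ρ (f k) = ρ (f l) → f k = f l

/-- Every aligned block of length `m` of `f` contains states `1` and `2` equally often
(`m = 2n` gives `2n`-balance). -/
def BalancedBlocks (f : ℕ → ℕ) (m : ℕ) : Prop :=
  ∀ k : ℕ, countIn (fun j => f (k * m + j)) m 1 = countIn (fun j => f (k * m + j)) m 2

/-- `f ≡_m g` : some relabelling of `f` (injective on states) has the same multiset of
entries as `g` on every aligned block of length `m`. -/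
def BlockEquiv (f g : ℕ → ℕ) (m : ℕ) : Prop :=
  ∃ ρ : ℕ → ℕ, (∀ k l, ρ (f k) = ρ (f l) ↔ f k = f l) ∧
    ∀ k : ℕ, (Multiset.range m).map (fun j => ρ (f (k * m + j))) =
             (Multiset.range m).map (fun j => g (k * m + j))

/-- `L` is a balanced run decomposition of one period (of length `p`) of `f`:
a list of positive run lengths summing to `p` such that each corresponding
consecutive run contains `1` and `2` equally often. -/
noncomputable def IsBRD (f : ℕ → ℕ) (p : ℕ) (L : List ℕ) : Prop :=
  L.sum = p ∧ (∀ a ∈ L, 0 < a) ∧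
  ∀ i : Fin L.length,
    countIn (fun j => f ((L.take i.1).sum + j)) (L.get i) 1 =
    countIn (fun j => f ((L.take i.1).sum + j)) (L.get i) 2

/-- `L` is a uniform run decomposition of one period (of length `p`) of `f`:
a list of positive run lengths summing to `p` such that each corresponding
consecutive run is constant. -/
def IsURD (f : ℕ → ℕ) (p : ℕ) (L : List ℕ) : Prop :=
  L.sum = p ∧ (∀ a ∈ L, 0 < a) ∧
  ∀ i : Fin L.length, ∀ j < L.get i, f ((L.take i.1).sum + j) = f ((L.take i.1).sum)

/-- The maximal number of runs in a BRD of `f` (period `p`). -/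
noncomputable def maxBRD (f : ℕ → ℕ) (p : ℕ) : ℕ :=
  sSup {m | ∃ L : List ℕ, IsBRD f p L ∧ L.length = m}

/-- The balance coefficient `b(f)` (with respect to period length `p`). -/
noncomputable def balCoeff (f : ℕ → ℕ) (p : ℕ) : ℚ := (maxBRD f p : ℚ) / (p : ℚ)

/-- The type of a run decomposition, as an infinite periodic sequence of run data. -/
def typeSeq (L : List ℕ) : ℕ → ℕ := fun i => L.getD (i % L.length) 0

/-- A BURD rotor: it has a BRD and a URD of the same type, i.e. the `i`-th balanced run
has length `2·b_i` where `b_i` is the length of the `i`-th uniform run. -/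
noncomputable def IsBURD (f : ℕ → ℕ) (p : ℕ) : Prop :=
  ∃ L M : List ℕ, IsBRD f p L ∧ IsURD f p M ∧ ∀ i, typeSeq L i = 2 * typeSeq M i

/-- The ba-frequency `m(f) = 2k/p` of an ab-ba sequence with period length `p`,
where `k` is the number of `21` blocks per period. -/
noncomputable def baFreq (f : ℕ → ℕ) (p : ℕ) : ℚ :=
  (2 * (((Finset.range (p / 2)).filter (fun j => f (2 * j) = 2)).card : ℚ)) / (p : ℚ)

/-! ### Rotor-router networks

A rotor-router network on a vertex type `V`: a source, a finite set of targets
(outdegree 0), and at every non-target vertex `v` the rotor pattern, recorded by the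
sequence `rotor v : ℕ → V` of heads of its successive out-edges.  The underlying digraph
has an edge `v → w` (for non-target `v`) iff `w` occurs in `v`'s rotor pattern. -/

structure RotorNetwork (V : Type) where
  source : V
  target : Finset V
  rotor : V → ℕ → V

namespace RotorNetwork

variable {V : Type} [DecidableEq V]

/-- One step of the particle dynamics on states `(current position, firing counts)`:
at a target, record it and restart at the source; at a non-target vertex `v`, fire the
next term of `v`'s rotor pattern. -/
noncomputable def step (N : RotorNetwork V) (s : V × (V → ℕ)) : V × (V → ℕ) :=
  if s.1 ∈ N.target then (N.source, s.2)
  else (N.rotor s.1 (s.2 s.1), Function.update s.2 s.1 (s.2 s.1 + 1))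

/-- The full trajectory of the particle, started at the source with all rotors fresh. -/
noncomputable def traj (N : RotorNetwork V) : ℕ → V × (V → ℕ)
  | 0 => (N.source, fun _ => 0)
  | t + 1 => N.step (N.traj t)

/-- The hitting sequence: the subsequence of targets visited, in order. -/
noncomputable def hitSeq (N : RotorNetwork V) : ℕ → V :=
  fun k => (N.traj (Nat.nth (fun t => (N.traj t).1 ∈ N.target) k)).1

/-- Adjacency of the underlying digraph. -/
def adj (N : RotorNetwork V) (v w : V) : Prop :=
  v ∉ N.target ∧ ∃ k, N.rotor v k = w

/-- A valid rotor-router network: the source is not a target, there is at least one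
target, and every non-target vertex can reach some target. -/
def Valid (N : RotorNetwork V) : Prop :=
  N.source ∉ N.target ∧ N.target.Nonempty ∧
  ∀ v : V, v ∉ N.target → ∃ t ∈ N.target, Relation.ReflTransGen N.adj v t

/-- The rotor pattern at `v` has type `r`: it is `e ∘ r` for some assignment `e` of
states to out-neighbours. -/
def HasType (N : RotorNetwork V) (v : V) (r : ℕ → ℕ) : Prop :=
  ∃ e : ℕ → V, ∀ k, N.rotor v k = e (r k)

end RotorNetwork

/-- The alternating rotor type `1, 2, 1, 2, …` of period `2`. -/
def rot12 : ℕ → ℕ := fun k => if k % 2 = 0 then 1 else 2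

/-- `r` is universal: every rotor type `r'` is, up to a bijective relabelling of states,
the hitting sequence of some finite rotor-router network all of whose rotors have type `r`. -/
noncomputable def Universal (r : ℕ → ℕ) : Prop :=
  ∀ (r' : ℕ → ℕ) (n' : ℕ), IsMinimalPeriod r' n' →
    ∃ (m : ℕ) (N : RotorNetwork (Fin m)), N.Valid ∧
      (∀ v, v ∉ N.target → N.HasType v r) ∧ SeqEquiv N.hitSeq r'

/-- The (1-based) position of the `m`-th occurrence of the state `v` in `f`
(`posOf f 1 = f`, `posOf f 2 = g` in the paper's notation; `countIn f · 1 = F`,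
`countIn f · 2 = G`). -/
noncomputable def posOf (f : ℕ → ℕ) (v m : ℕ) : ℕ := Nat.nth (fun k => f k = v) (m - 1) + 1


/-! ### Auxiliary lemmas for Statement 4 -/

private lemma countIn_eq_count' (f : ℕ → ℕ) (t v : ℕ) :
    countIn f t v = Nat.count (fun k => f k = v) t := by
  rw [Nat.count_eq_card_filter_range]; rfl

private lemma count_add_of_periodic' (P : ℕ → Prop) [DecidablePred P] (m : ℕ)
    (h : ∀ t, P (t + m) ↔ P t) (t : ℕ) :
    Nat.count P (t + m) = Nat.count P t + Nat.count P m := by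
  induction t with
  | zero => simp
  | succ t ih =>
    have e : t + 1 + m = (t + m) + 1 := by omega
    rw [e, Nat.count_succ, ih, Nat.count_succ]
    by_cases hpt : P t
    · rw [if_pos hpt, if_pos ((h t).2 hpt)]; ring
    · rw [if_neg hpt, if_neg (fun c => hpt ((h t).1 c))]; ring

private lemma count_add_mul_of_periodic' (P : ℕ → Prop) [DecidablePred P] (m : ℕ)
    (h : ∀ t, P (t + m) ↔ P t) (t : ℕ) :
    ∀ k : ℕ, Nat.count P (t + k * m) = Nat.count P t + k * Nat.count P m := by
  intro k
  induction k with
  | zero => simp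
  | succ k ih =>
    have e : t + (k + 1) * m = (t + k * m) + m := by ring
    rw [e, count_add_of_periodic' P m h, ih]; ring

private lemma periodic_add_mul' {α : Type*} (f : ℕ → α) (n : ℕ)
    (h : ∀ k, f (k + n) = f k) : ∀ t k, f (t + k * n) = f t := by
  intro t k
  induction k with
  | zero => simp
  | succ k ih =>
    have e : t + (k + 1) * n = (t + k * n) + n := by ring
    rw [e, h, ih]

private lemma hitseq_nth_periodic (h : ℕ → Option ℕ) (m : ℕ) (hm : ∀ t, h (t + m) = h t)
    (hinf : {t | (h t).isSome = true}.Infinite) (k : ℕ) :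
    Nat.nth (fun t => (h t).isSome = true) (k + Nat.count (fun t => (h t).isSome = true) m)
      = Nat.nth (fun t => (h t).isSome = true) k + m := by
  set Q : ℕ → Prop := fun t => (h t).isSome = true with hQ
  have hiff : ∀ t, Q (t + m) ↔ Q t := fun t => by simp only [hQ, hm t]
  have hpt : Q (Nat.nth Q k) := Nat.nth_mem_of_infinite hinf k
  have h2 : Q (Nat.nth Q k + m) := (hiff _).2 hpt
  have h3 : Nat.count Q (Nat.nth Q k + m) = k + Nat.count Q m := by
    rw [count_add_of_periodic' Q m hiff, Nat.count_nth_of_infinite hinf]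
  rw [← h3, Nat.nth_count h2]

private lemma two_mul_prod_le (a b : ℕ) : 2 * (a * b + b * a) ≤ (a + b) * (a + b) := by
  rcases Nat.le_total a b with h | h
  · obtain ⟨c, rfl⟩ := Nat.le.dest h
    nlinarith
  · obtain ⟨c, rfl⟩ := Nat.le.dest h
    nlinarith

private lemma card_filter_hit (r : ℕ → ℕ) (n : ℕ) (hn : 0 < n)
    (hper : IsPeriodicWith r n) (u w : ℕ) (hu : ∃ k, r k = u) :
    ((Finset.range (n * n)).filter
        (fun t => r t = u ∧ r (Nat.count (fun k => r k = u) t) = w)).card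
      = Nat.count (fun k => r k = w) (n * Nat.count (fun k => r k = u) n) := by
  set p : ℕ → Prop := fun k => r k = u with hp
  have hiff : ∀ t, p (t + n) ↔ p t := fun t => by simp only [hp, hper t]
  have hinf : (setOf p).Infinite := by
    obtain ⟨k0, hk0⟩ := hu
    apply Set.infinite_of_injective_forall_mem (f := fun j : ℕ => k0 + j * n)
    · intro x y hxy
      simp only at hxy
      have : x * n = y * n := by omega
      exact Nat.eq_of_mul_eq_mul_right hn this
    · intro j
      show r (k0 + j * n) = u
      rw [periodic_add_mul' r n hper k0 j]; exact hk0
  have hsq' : Nat.count p (n * n) = n * Nat.count p n := by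
    have := count_add_mul_of_periodic' p n hiff 0 n
    simpa using this
  rw [Nat.count_eq_card_filter_range]
  apply Finset.card_bij (fun t _ => Nat.count p t)
  · intro t ht
    rw [Finset.mem_filter, Finset.mem_range] at ht
    obtain ⟨htlt, htu, htw⟩ := ht
    refine Finset.mem_filter.2 ⟨Finset.mem_range.2 ?_, htw⟩
    show Nat.count p t < n * Nat.count p n
    have h1 : Nat.count p t < Nat.count p (t + 1) := by
      rw [Nat.count_succ, if_pos htu]; omega
    have h2 : Nat.count p (t + 1) ≤ Nat.count p (n * n) :=
      Nat.count_monotone p (by omega)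
    omega
  · intro t ht t' ht' hct
    rw [Finset.mem_filter] at ht ht'
    have h1 : p t := ht.2.1
    have h2 : p t' := ht'.2.1
    rw [← Nat.nth_count h1, ← Nat.nth_count h2, hct]
  · intro m hm
    rw [Finset.mem_filter, Finset.mem_range] at hm
    obtain ⟨hmlt, hmw⟩ := hm
    refine ⟨Nat.nth p m, ?_, Nat.count_nth_of_infinite hinf m⟩
    refine Finset.mem_filter.2 ⟨Finset.mem_range.2 ?_, Nat.nth_mem_of_infinite hinf m, ?_⟩
    · exact Nat.nth_lt_of_lt_count (by rw [hsq']; exact hmlt)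
    · rw [Nat.count_nth_of_infinite hinf m]; exact hmw

/-- For a two-state rotor type `r` of period `n`, the period of `UD(r)`
is at most `n²/2` and the period of `BT(r)` is at most `n²`. -/
theorem statement4 (r : ℕ → ℕ) (n : ℕ) (h2 : TwoState r) (hmin : IsMinimalPeriod r n) :
    (∃ p : ℕ, 0 < p ∧ IsPeriodicWith (UDseq r) p ∧ 2 * p ≤ n ^ 2) ∧
    (∃ q : ℕ, 0 < q ∧ IsPeriodicWith (BTseq r) q ∧ q ≤ n ^ 2) := by
  
  obtain ⟨hn, hper, -⟩ := hmin
  obtain ⟨hval, ⟨k1, hk1⟩, ⟨k2, hk2⟩⟩ := h2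
  have hsq : n ^ 2 = n * n := by ring
  have hrr : ∀ t, r (t + n * n) = r t := fun t => periodic_add_mul' r n hper t n
  have hiff1 : ∀ t, (fun k => r k = 1) (t + n) ↔ (fun k => r k = 1) t :=
    fun t => by simp only [hper t]
  have hiff2 : ∀ t, (fun k => r k = 2) (t + n) ↔ (fun k => r k = 2) t :=
    fun t => by simp only [hper t]
  have hkey : ∀ v t, r (countIn r (t + n * n) v) = r (countIn r t v) := by
    intro v t
    rw [countIn_eq_count', countIn_eq_count',
      count_add_mul_of_periodic' (fun k => r k = v) n (fun s => by simp only [hper s]) t n,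
      mul_comm n (Nat.count (fun k => r k = v) n)]
    exact periodic_add_mul' r n hper _ _
  have hmod : ∀ k, r k = r (k % n) := by
    intro k
    conv_lhs => rw [← Nat.mod_add_div' k n]
    exact periodic_add_mul' r n hper _ _
  have hapos : 0 < Nat.count (fun k => r k = 1) n := by
    rw [Nat.count_eq_card_filter_range, Finset.card_pos]
    exact ⟨k1 % n, Finset.mem_filter.2 ⟨Finset.mem_range.2 (Nat.mod_lt _ hn),
      by rw [← hmod k1]; exact hk1⟩⟩
  have hbpos : 0 < Nat.count (fun k => r k = 2) n := by
    rw [Nat.count_eq_card_filter_range, Finset.card_pos]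
    exact ⟨k2 % n, Finset.mem_filter.2 ⟨Finset.mem_range.2 (Nat.mod_lt _ hn),
      by rw [← hmod k2]; exact hk2⟩⟩
  have hassum : Nat.count (fun k => r k = 1) n + Nat.count (fun k => r k = 2) n = n := by
    rw [Nat.count_eq_card_filter_range, Nat.count_eq_card_filter_range]
    have he : (Finset.range n).filter (fun x => r x = 2)
        = (Finset.range n).filter (fun x => ¬ (r x = 1)) := by
      apply Finset.filter_congr
      intro x _
      rcases hval x with h | h <;> simp [h]
    rw [he]
    simpa using Finset.card_filter_add_card_filter_not
      (s := Finset.range n) (p := fun x => r x = 1)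
  -- hitAt periodicity
  have hHit : ∀ t, hitAt true false r (t + n * n) = hitAt true false r t := by
    intro t
    simp only [hitAt, hrr t, hkey 1 t, hkey 2 t]
  -- characterization of hits
  have hPchar : ∀ t, (hitAt true false r t).isSome = true ↔
      ((r t = 1 ∧ r (Nat.count (fun k => r k = 1) t) = 2) ∨
       (r t = 2 ∧ r (Nat.count (fun k => r k = 2) t) = 1)) := by
    intro t
    simp only [hitAt, countIn_eq_count']
    rcases hval t with h | h <;>
      rcases hval (Nat.count (fun k => r k = 1) t) with h1 | h1 <;>
      rcases hval (Nat.count (fun k => r k = 2) t) with g1 | g1 <;>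
      simp [h, h1, g1]
  -- count of hits in one block
  have hHcard : Nat.count (fun t => (hitAt true false r t).isSome = true) (n * n)
      = Nat.count (fun k => r k = 2) (n * Nat.count (fun k => r k = 1) n)
        + Nat.count (fun k => r k = 1) (n * Nat.count (fun k => r k = 2) n) := by
    rw [Nat.count_eq_card_filter_range]
    have he : (Finset.range (n * n)).filter (fun t => (hitAt true false r t).isSome = true)
        = (Finset.range (n * n)).filter
            (fun t => (r t = 1 ∧ r (Nat.count (fun k => r k = 1) t) = 2)
              ∨ (r t = 2 ∧ r (Nat.count (fun k => r k = 2) t) = 1)) := by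
      apply Finset.filter_congr
      intro t _
      exact hPchar t
    rw [he, Finset.filter_or, Finset.card_union_of_disjoint]
    · rw [card_filter_hit r n hn hper 1 2 ⟨k1, hk1⟩,
        card_filter_hit r n hn hper 2 1 ⟨k2, hk2⟩]
    · rw [Finset.disjoint_left]
      intro t ht1 ht2
      rw [Finset.mem_filter] at ht1 ht2
      have := ht1.2.1
      have := ht2.2.1
      omega
  have hab1 : Nat.count (fun k => r k = 2) (n * Nat.count (fun k => r k = 1) n)
      = Nat.count (fun k => r k = 1) n * Nat.count (fun k => r k = 2) n := by
    have := count_add_mul_of_periodic' (fun k => r k = 2) n hiff2 0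
      (Nat.count (fun k => r k = 1) n)
    simpa [mul_comm] using this
  have hab2 : Nat.count (fun k => r k = 1) (n * Nat.count (fun k => r k = 2) n)
      = Nat.count (fun k => r k = 2) n * Nat.count (fun k => r k = 1) n := by
    have := count_add_mul_of_periodic' (fun k => r k = 1) n hiff1 0
      (Nat.count (fun k => r k = 2) n)
    simpa [mul_comm] using this
  have hHval : Nat.count (fun t => (hitAt true false r t).isSome = true) (n * n)
      = Nat.count (fun k => r k = 1) n * Nat.count (fun k => r k = 2) n
        + Nat.count (fun k => r k = 2) n * Nat.count (fun k => r k = 1) n := by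
    rw [hHcard, hab1, hab2]
  have hHpos : 0 < Nat.count (fun t => (hitAt true false r t).isSome = true) (n * n) := by
    rw [hHval]
    have := Nat.mul_pos hapos hbpos
    omega
  -- infinitude of hits
  have hinf : {t | (hitAt true false r t).isSome = true}.Infinite := by
    obtain ⟨t0, ht0⟩ : ∃ t, (hitAt true false r t).isSome = true := by
      by_contra hcon
      push_neg at hcon
      have : Nat.count (fun t => (hitAt true false r t).isSome = true) (n * n) = 0 := by
        rw [Nat.count_eq_card_filter_range, Finset.card_eq_zero, Finset.filter_eq_empty_iff]
        intro t _
        exact hcon t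
      omega
    apply Set.infinite_of_injective_forall_mem (f := fun j : ℕ => t0 + j * (n * n))
    · intro x y hxy
      simp only at hxy
      have hx : x * (n * n) = y * (n * n) := by omega
      exact Nat.eq_of_mul_eq_mul_right (Nat.mul_pos hn hn) hx
    · intro j
      show (hitAt true false r (t0 + j * (n * n))).isSome = true
      rw [periodic_add_mul' (hitAt true false r) (n * n) hHit t0 j]
      exact ht0
  constructor
  · refine ⟨Nat.count (fun t => (hitAt true false r t).isSome = true) (n * n),
      hHpos, ?_, ?_⟩
    · intro k
      show compSeq true false r _ = compSeq true false r _
      unfold compSeq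
      rw [hitseq_nth_periodic (hitAt true false r) (n * n) hHit hinf k, hHit]
    · rw [hHval, hsq]
      have h4 := two_mul_prod_le (Nat.count (fun k => r k = 1) n)
        (Nat.count (fun k => r k = 2) n)
      rw [hassum] at h4
      exact h4
  · refine ⟨n ^ 2, by positivity, ?_, le_refl _⟩
    intro t
    rw [hsq]
    simp only [BTseq, hrr t, hkey 1 t, hkey 2 t]
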